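/- Define G_4 = P_4 (the path on four vertices), and inductively G_{2n+1} = G_{2n} with one universal (apex) vertex added and G_{2n+2} = G_{2n+1} with one isolated vertex added, for n ≥ 2. Then for every n ≥ 4, if G_n is isomorphic to a substitution T(H_1, …, H_k) of graphs H_1, …, H_k into a template graph T where every H_i is a cograph, then k = n (i.e., every H_i is a single vertex). Hence any algebraic expression for G_n in which the substitution operation is used as the last operation has width n, whereas G_n can be built using a single substitution operation of width 4 (building P_4) followed by complete joins with single vertices and disjoint unions with single vertices. -/

import Mathlib

/-- Disjoint union of two graphs (operation 2). -/
def graphDisjUnion {α β : Type} (G : SimpleGraph α) (H : SimpleGraph β) :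
    SimpleGraph (α ⊕ β) where
  Adj x y :=
    match x, y with
    | .inl a, .inl b => G.Adj a b
    | .inr a, .inr b => H.Adj a b
    | _, _ => False
  symm := by refine ⟨?_⟩; rintro (a | a) (b | b) h <;> first | exact G.symm.symm _ _ h | exact H.symm.symm _ _ h | exact h
  loopless := by refine ⟨?_⟩; rintro (a | a) h <;> first | exact G.loopless.irrefl _ h | exact H.loopless.irrefl _ h

/-- Complete join of two graphs (operation 3). -/
def graphJoin {α β : Type} (G : SimpleGraph α) (H : SimpleGraph β) :
    SimpleGraph (α ⊕ β) where
  Adj x y :=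
    match x, y with
    | .inl a, .inl b => G.Adj a b
    | .inr a, .inr b => H.Adj a b
    | _, _ => True
  symm := by refine ⟨?_⟩; rintro (a | a) (b | b) h <;> first | exact G.symm.symm _ _ h | exact H.symm.symm _ _ h | exact h
  loopless := by refine ⟨?_⟩; rintro (a | a) h <;> first | exact G.loopless.irrefl _ h | exact H.loopless.irrefl _ h

/-- Expressions built from single vertices by disjoint unions and complete joins. -/
inductive Cotree : Type
  | leaf : Cotree
  | du : Cotree → Cotree → Cotree
  | cj : Cotree → Cotree → Cotree

/-- The vertex type of the graph described by a cotree. -/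
def Cotree.Verts : Cotree → Type
  | .leaf => Unit
  | .du s t => s.Verts ⊕ t.Verts
  | .cj s t => s.Verts ⊕ t.Verts

/-- The graph described by a cotree. -/
def Cotree.graph : (t : Cotree) → SimpleGraph t.Verts
  | .leaf => ⊥
  | .du s t => graphDisjUnion s.graph t.graph
  | .cj s t => graphJoin s.graph t.graph

/-- A graph is a cograph if it can be built from single-vertex graphs by repeatedly
taking disjoint unions and complete joins. -/
def IsCograph {α : Type*} (G : SimpleGraph α) : Prop :=
  ∃ t : Cotree, Nonempty (G ≃g t.graph)

/-- The substitution `T(H_1, …, H_k)` of the graphs `H i` into the template graph `T`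
(operation 4). -/
def graphSubst {k : ℕ} (T : SimpleGraph (Fin k)) {β : Fin k → Type}
    (H : ∀ i, SimpleGraph (β i)) : SimpleGraph (Σ i, β i) where
  Adj x y := T.Adj x.1 y.1 ∨
    ∃ (i : Fin k) (a b : β i), x = ⟨i, a⟩ ∧ y = ⟨i, b⟩ ∧ (H i).Adj a b
  symm := by
    refine ⟨?_⟩
    rintro x y (h | ⟨i, a, b, rfl, rfl, h⟩)
    · exact Or.inl (T.symm.symm _ _ h)
    · exact Or.inr ⟨i, b, a, rfl, rfl, (H i).symm.symm _ _ h⟩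
  loopless := by
    refine ⟨?_⟩
    rintro x (h | ⟨i, a, b, rfl, he, h⟩)
    · exact T.loopless.irrefl _ h
    · obtain ⟨-, hab⟩ := Sigma.mk.inj_iff.mp he
      cases hab
      exact (H i).loopless.irrefl _ h

/-- Adding a universal (apex) vertex to a graph. -/
def addApex {α : Type} (G : SimpleGraph α) : SimpleGraph (Option α) where
  Adj x y := (∃ a b, x = some a ∧ y = some b ∧ G.Adj a b) ∨
    (x = none ∧ y ≠ none) ∨ (y = none ∧ x ≠ none)
  symm := by
    refine ⟨?_⟩
    rintro x y (⟨a, b, rfl, rfl, h⟩ | ⟨rfl, h⟩ | ⟨rfl, h⟩)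
    · exact Or.inl ⟨b, a, rfl, rfl, G.symm.symm _ _ h⟩
    · exact Or.inr (Or.inr ⟨rfl, h⟩)
    · exact Or.inr (Or.inl ⟨rfl, h⟩)
  loopless := by
    refine ⟨?_⟩
    rintro x (⟨a, b, rfl, hb, h⟩ | ⟨rfl, h⟩ | ⟨rfl, h⟩)
    · cases hb; exact G.loopless.irrefl _ h
    · exact h rfl
    · exact h rfl

/-- Adding an isolated vertex to a graph. -/
def addIsolated {α : Type} (G : SimpleGraph α) : SimpleGraph (Option α) where
  Adj x y := ∃ a b, x = some a ∧ y = some b ∧ G.Adj a b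
  symm := by
    refine ⟨?_⟩
    rintro x y ⟨a, b, rfl, rfl, h⟩
    exact ⟨b, a, rfl, rfl, G.symm.symm _ _ h⟩
  loopless := by
    refine ⟨?_⟩
    rintro x ⟨a, b, rfl, hb, h⟩
    cases hb; exact G.loopless.irrefl _ h

/-- The vertex type of `G_{j+4}`. -/
def famType : ℕ → Type
  | 0 => Fin 4
  | j + 1 => Option (famType j)

/-- The family `G_n` (indexed here by `j = n - 4`): `G_4 = P_4`,
`G_{2n+1} = G_{2n}` plus an apex vertex, and `G_{2n+2} = G_{2n+1}` plus an isolated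
vertex. -/
def famGraph : (j : ℕ) → SimpleGraph (famType j)
  | 0 => SimpleGraph.pathGraph 4
  | j + 1 => if j % 2 = 0 then addApex (famGraph j) else addIsolated (famGraph j)

/-- Graphs built by a single substitution operation of width (at most) `4` with cograph
operands, followed by complete joins with single vertices (apex additions) and disjoint
unions with single vertices (isolated-vertex additions). -/
inductive BuiltFromOneSubstWidth4 : {α : Type} → SimpleGraph α → Prop
  | base {α : Type} (G : SimpleGraph α) (T : SimpleGraph (Fin 4)) (β : Fin 4 → Type)
      (H : ∀ i, SimpleGraph (β i)) (hne : ∀ i, Nonempty (β i))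
      (hco : ∀ i, IsCograph (H i)) (hiso : Nonempty (G ≃g graphSubst T H)) :
      BuiltFromOneSubstWidth4 G
  | apex {α : Type} (G : SimpleGraph α) :
      BuiltFromOneSubstWidth4 G → BuiltFromOneSubstWidth4 (addApex G)
  | isol {α : Type} (G : SimpleGraph α) :
      BuiltFromOneSubstWidth4 G → BuiltFromOneSubstWidth4 (addIsolated G)

section Aux

open SimpleGraph

/-- The induced-`P₄` pattern on four (implicitly distinct) vertices. -/
def P4pat {α : Type*} (G : SimpleGraph α) (a b c d : α) : Prop :=
  G.Adj a b ∧ G.Adj b c ∧ G.Adj c d ∧ ¬G.Adj a c ∧ ¬G.Adj a d ∧ ¬G.Adj b d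

lemma P4pat.map {α β : Type*} {G : SimpleGraph α} {G' : SimpleGraph β} (e : G ≃g G')
    {a b c d : α} (h : P4pat G a b c d) : P4pat G' (e a) (e b) (e c) (e d) := by
  obtain ⟨h1, h2, h3, h4, h5, h6⟩ := h
  exact ⟨e.map_adj_iff.mpr h1, e.map_adj_iff.mpr h2, e.map_adj_iff.mpr h3,
    fun h => h4 (e.map_adj_iff.mp h), fun h => h5 (e.map_adj_iff.mp h),
    fun h => h6 (e.map_adj_iff.mp h)⟩

lemma cotree_no_p4 : ∀ (t : Cotree) (a b c d : t.Verts), ¬ P4pat t.graph a b c d := by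
  intro t
  induction t with
  | leaf => rintro a b c d ⟨h1, -⟩; exact h1
  | du s t ihs iht =>
    rintro (a|a) (b|b) (c|c) (d|d) ⟨h1, h2, h3, h4, h5, h6⟩ <;>
      first
        | exact h1 | exact h2 | exact h3
        | exact ihs a b c d ⟨h1, h2, h3, h4, h5, h6⟩
        | exact iht a b c d ⟨h1, h2, h3, h4, h5, h6⟩
  | cj s t ihs iht =>
    rintro (a|a) (b|b) (c|c) (d|d) ⟨h1, h2, h3, h4, h5, h6⟩ <;>
      first
        | exact h4 trivial | exact h5 trivial | exact h6 trivial
        | exact ihs a b c d ⟨h1, h2, h3, h4, h5, h6⟩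
        | exact iht a b c d ⟨h1, h2, h3, h4, h5, h6⟩

lemma IsCograph.no_p4 {α : Type*} {G : SimpleGraph α} (h : IsCograph G)
    (a b c d : α) : ¬ P4pat G a b c d := by
  obtain ⟨t, ⟨e⟩⟩ := h
  intro hp
  exact cotree_no_p4 t _ _ _ _ (hp.map e)

/-- A module of a graph. -/
def IsModule {α : Type*} (G : SimpleGraph α) (M : Set α) : Prop :=
  ∀ u, u ∉ M → ∀ x ∈ M, ∀ y ∈ M, (G.Adj u x ↔ G.Adj u y)

/-! ### Basic adjacency lemmas for the constructions -/

lemma addApex_some_some {α : Type} (G : SimpleGraph α) (a b : α) :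
    (addApex G).Adj (some a) (some b) ↔ G.Adj a b := by
  constructor
  · rintro (⟨p, q, hp, hq, h⟩ | ⟨h, -⟩ | ⟨h, -⟩)
    · cases hp; cases hq; exact h
    · cases h
    · cases h
  · intro h; exact Or.inl ⟨a, b, rfl, rfl, h⟩

lemma addIsolated_some_some {α : Type} (G : SimpleGraph α) (a b : α) :
    (addIsolated G).Adj (some a) (some b) ↔ G.Adj a b := by
  constructor
  · rintro ⟨p, q, hp, hq, h⟩
    cases hp; cases hq; exact h
  · intro h; exact ⟨a, b, rfl, rfl, h⟩

lemma addApex_adj_none_left {α : Type} (G : SimpleGraph α) (b : α) :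
    (addApex G).Adj none (some b) :=
  Or.inr (Or.inl ⟨rfl, by simp⟩)

lemma addApex_adj_none_right {α : Type} (G : SimpleGraph α) (a : α) :
    (addApex G).Adj (some a) none :=
  Or.inr (Or.inr ⟨rfl, by simp⟩)

lemma addIsolated_not_adj_none_right {α : Type} (G : SimpleGraph α) (x : Option α) :
    ¬ (addIsolated G).Adj x none := by
  rintro ⟨a, b, -, h, -⟩; cases h

lemma addIsolated_not_adj_none_left {α : Type} (G : SimpleGraph α) (x : Option α) :
    ¬ (addIsolated G).Adj none x := by
  rintro ⟨a, b, h, -, -⟩; cases h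

lemma P4pat_addApex_some {α : Type} {G : SimpleGraph α} {a b c d : α}
    (h : P4pat G a b c d) :
    P4pat (addApex G) (some a) (some b) (some c) (some d) := by
  obtain ⟨h1, h2, h3, h4, h5, h6⟩ := h
  exact ⟨(addApex_some_some G _ _).mpr h1, (addApex_some_some G _ _).mpr h2,
    (addApex_some_some G _ _).mpr h3, fun h => h4 ((addApex_some_some G _ _).mp h),
    fun h => h5 ((addApex_some_some G _ _).mp h),
    fun h => h6 ((addApex_some_some G _ _).mp h)⟩

lemma P4pat_addIsolated_some {α : Type} {G : SimpleGraph α} {a b c d : α}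
    (h : P4pat G a b c d) :
    P4pat (addIsolated G) (some a) (some b) (some c) (some d) := by
  obtain ⟨h1, h2, h3, h4, h5, h6⟩ := h
  exact ⟨(addIsolated_some_some G _ _).mpr h1, (addIsolated_some_some G _ _).mpr h2,
    (addIsolated_some_some G _ _).mpr h3, fun h => h4 ((addIsolated_some_some G _ _).mp h),
    fun h => h5 ((addIsolated_some_some G _ _).mp h),
    fun h => h6 ((addIsolated_some_some G _ _).mp h)⟩

/-! ### The family `famGraph` -/

lemma famGraph_succ_even (j : ℕ) (h : j % 2 = 0) :
    famGraph (j + 1) = addApex (famGraph j) := by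
  show (if j % 2 = 0 then addApex (famGraph j) else addIsolated (famGraph j)) = _
  rw [if_pos h]

lemma famGraph_succ_odd (j : ℕ) (h : j % 2 = 1) :
    famGraph (j + 1) = addIsolated (famGraph j) := by
  show (if j % 2 = 0 then addApex (famGraph j) else addIsolated (famGraph j)) = _
  rw [if_neg (by omega)]

lemma famType_nonempty : ∀ j, Nonempty (famType j)
  | 0 => ⟨(0 : Fin 4)⟩
  | _ + 1 => ⟨none⟩

lemma famGraph_succ_some (j : ℕ) (a b : famType j) :
    (famGraph (j + 1)).Adj (some a) (some b) ↔ (famGraph j).Adj a b := by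
  rcases Nat.mod_two_eq_zero_or_one j with h | h
  · rw [famGraph_succ_even j h]; exact addApex_some_some _ _ _
  · rw [famGraph_succ_odd j h]; exact addIsolated_some_some _ _ _

/-- The original four vertices of `P₄` inside `famType j`. -/
def baseV : (j : ℕ) → Fin 4 → famType j
  | 0 => id
  | j + 1 => fun i => some (baseV j i)

lemma famGraph_base : ∀ j, P4pat (famGraph j) (baseV j 0) (baseV j 1) (baseV j 2) (baseV j 3)
  | 0 => by
    show P4pat (SimpleGraph.pathGraph 4) (0 : Fin 4) 1 2 3
    refine ⟨?_, ?_, ?_, ?_, ?_, ?_⟩ <;>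
      · rw [SimpleGraph.pathGraph_adj]; decide
  | j + 1 => by
    obtain ⟨h1, h2, h3, h4, h5, h6⟩ := famGraph_base j
    exact ⟨(famGraph_succ_some j _ _).mpr h1, (famGraph_succ_some j _ _).mpr h2,
      (famGraph_succ_some j _ _).mpr h3, fun h => h4 ((famGraph_succ_some j _ _).mp h),
      fun h => h5 ((famGraph_succ_some j _ _).mp h),
      fun h => h6 ((famGraph_succ_some j _ _).mp h)⟩

lemma p4_no_univ : ¬ ∃ v : Fin 4, ∀ w, w ≠ v → (SimpleGraph.pathGraph 4).Adj v w := by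
  rintro ⟨v, hv⟩
  fin_cases v
  · exact absurd (hv 2 (by decide)) (by rw [SimpleGraph.pathGraph_adj]; decide)
  · exact absurd (hv 3 (by decide)) (by rw [SimpleGraph.pathGraph_adj]; decide)
  · exact absurd (hv 0 (by decide)) (by rw [SimpleGraph.pathGraph_adj]; decide)
  · exact absurd (hv 1 (by decide)) (by rw [SimpleGraph.pathGraph_adj]; decide)

lemma famGraph_no_univ (j : ℕ) (h : j % 2 = 0) :
    ¬ ∃ v, ∀ w, w ≠ v → (famGraph j).Adj v w := by
  rcases j with _ | j
  · exact p4_no_univ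
  · have h' : j % 2 = 1 := by omega
    rw [famGraph_succ_odd j h']
    rintro ⟨v, hv⟩
    obtain ⟨x⟩ := famType_nonempty j
    cases v with
    | none => exact addIsolated_not_adj_none_left _ _ (hv (some x) (Option.some_ne_none x))
    | some a => exact addIsolated_not_adj_none_right _ _ (hv none (Option.some_ne_none a).symm)

lemma famGraph_no_isol (j : ℕ) (h : j % 2 = 1) :
    ¬ ∃ v, ∀ w, ¬ (famGraph j).Adj v w := by
  obtain ⟨j, rfl⟩ : ∃ j', j = j' + 1 := ⟨j - 1, by omega⟩
  have h' : j % 2 = 0 := by omega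
  rw [famGraph_succ_even j h']
  rintro ⟨v, hv⟩
  obtain ⟨x⟩ := famType_nonempty j
  cases v with
  | none => exact hv (some x) (addApex_adj_none_left _ x)
  | some a => exact hv none (addApex_adj_none_right _ a)

/-! ### `P₄` is prime -/

def adjB (a b : Fin 4) : Bool := (a.val + 1 == b.val) || (b.val + 1 == a.val)

lemma adjB_iff (a b : Fin 4) : adjB a b = true ↔ (SimpleGraph.pathGraph 4).Adj a b := by
  rw [SimpleGraph.pathGraph_adj]
  simp [adjB]

lemma p4_module_bool : ∀ f : Fin 4 → Bool,
    (∀ u, f u = false → ∀ x, f x = true → ∀ y, f y = true → adjB u x = adjB u y) →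
    ∀ x y, f x = true → f y = true → x ≠ y → ∀ z, f z = true := by decide

lemma p4_module (M : Set (Fin 4)) (hM : IsModule (SimpleGraph.pathGraph 4) M)
    {x y : Fin 4} (hx : x ∈ M) (hy : y ∈ M) (hxy : x ≠ y) : ∀ z, z ∈ M := by
  classical
  have key := p4_module_bool (fun z => decide (z ∈ M)) ?_ x y
    (decide_eq_true hx) (decide_eq_true hy) hxy
  · exact fun z => of_decide_eq_true (key z)
  · intro u hu a ha b hb
    rw [Bool.eq_iff_iff, adjB_iff, adjB_iff]
    exact hM u (of_decide_eq_false hu) a (of_decide_eq_true ha) b (of_decide_eq_true hb)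

/-! ### The module induction steps -/

lemma module_step_apex {α : Type} (G : SimpleGraph α)
    (hnu : ¬ ∃ v, ∀ w, w ≠ v → G.Adj v w)
    (hbase : ∃ a b c d : Option α, P4pat (addApex G) a b c d)
    (ih : ∀ M : Set α, IsModule G M → ∀ x ∈ M, ∀ y ∈ M, x ≠ y →
      ∃ a b c d, a ∈ M ∧ b ∈ M ∧ c ∈ M ∧ d ∈ M ∧ P4pat G a b c d)
    (M : Set (Option α)) (hM : IsModule (addApex G) M) :
    ∀ x ∈ M, ∀ y ∈ M, x ≠ y →
      ∃ a b c d, a ∈ M ∧ b ∈ M ∧ c ∈ M ∧ d ∈ M ∧ P4pat (addApex G) a b c d := by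
  intro x hx y hy hxy
  by_cases hall : ∀ u, u ∈ M
  · obtain ⟨a, b, c, d, hp⟩ := hbase
    exact ⟨a, b, c, d, hall a, hall b, hall c, hall d, hp⟩
  push_neg at hall
  obtain ⟨u, hu⟩ := hall
  have hmod' : IsModule G {a | some a ∈ M} := by
    intro v hv a ha b hb
    have := hM (some v) hv (some a) ha (some b) hb
    rwa [addApex_some_some, addApex_some_some] at this
  by_cases h2 : ∃ a, some a ∈ M ∧ ∃ b, some b ∈ M ∧ a ≠ b
  · obtain ⟨a, ha, b, hb, hab⟩ := h2
    obtain ⟨p, q, r, s, hp, hq, hr, hs, hpat⟩ := ih _ hmod' a ha b hb hab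
    exact ⟨some p, some q, some r, some s, hp, hq, hr, hs, P4pat_addApex_some hpat⟩
  push_neg at h2
  -- none ∈ M and M ∩ some = {x₀}
  have hnone : (none : Option α) ∈ M := by
    cases x with
    | none => exact hx
    | some x₀ =>
      cases y with
      | none => exact hy
      | some y₀ => exact absurd (h2 x₀ hx y₀ hy) (fun h => hxy (by rw [h]))
  obtain ⟨x₀, hx₀⟩ : ∃ x₀, some x₀ ∈ M := by
    cases x with
    | none =>
      cases y with
      | none => exact absurd rfl hxy
      | some y₀ => exact ⟨y₀, hy⟩
    | some x₀ => exact ⟨x₀, hx⟩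
  exfalso
  apply hnu
  refine ⟨x₀, fun w hw => ?_⟩
  have hwM : some w ∉ M := fun hwM => hw (h2 w hwM x₀ hx₀)
  have := hM (some w) hwM none hnone (some x₀) hx₀
  have hadj := this.mp (addApex_adj_none_right G w)
  rw [addApex_some_some] at hadj
  exact hadj.symm

lemma module_step_isol {α : Type} (G : SimpleGraph α)
    (hni : ¬ ∃ v, ∀ w, ¬ G.Adj v w)
    (hbase : ∃ a b c d : Option α, P4pat (addIsolated G) a b c d)
    (ih : ∀ M : Set α, IsModule G M → ∀ x ∈ M, ∀ y ∈ M, x ≠ y →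
      ∃ a b c d, a ∈ M ∧ b ∈ M ∧ c ∈ M ∧ d ∈ M ∧ P4pat G a b c d)
    (M : Set (Option α)) (hM : IsModule (addIsolated G) M) :
    ∀ x ∈ M, ∀ y ∈ M, x ≠ y →
      ∃ a b c d, a ∈ M ∧ b ∈ M ∧ c ∈ M ∧ d ∈ M ∧ P4pat (addIsolated G) a b c d := by
  intro x hx y hy hxy
  by_cases hall : ∀ u, u ∈ M
  · obtain ⟨a, b, c, d, hp⟩ := hbase
    exact ⟨a, b, c, d, hall a, hall b, hall c, hall d, hp⟩
  push_neg at hall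
  obtain ⟨u, hu⟩ := hall
  have hmod' : IsModule G {a | some a ∈ M} := by
    intro v hv a ha b hb
    have := hM (some v) hv (some a) ha (some b) hb
    rwa [addIsolated_some_some, addIsolated_some_some] at this
  by_cases h2 : ∃ a, some a ∈ M ∧ ∃ b, some b ∈ M ∧ a ≠ b
  · obtain ⟨a, ha, b, hb, hab⟩ := h2
    obtain ⟨p, q, r, s, hp, hq, hr, hs, hpat⟩ := ih _ hmod' a ha b hb hab
    exact ⟨some p, some q, some r, some s, hp, hq, hr, hs, P4pat_addIsolated_some hpat⟩
  push_neg at h2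
  have hnone : (none : Option α) ∈ M := by
    cases x with
    | none => exact hx
    | some x₀ =>
      cases y with
      | none => exact hy
      | some y₀ => exact absurd (h2 x₀ hx y₀ hy) (fun h => hxy (by rw [h]))
  obtain ⟨x₀, hx₀⟩ : ∃ x₀, some x₀ ∈ M := by
    cases x with
    | none =>
      cases y with
      | none => exact absurd rfl hxy
      | some y₀ => exact ⟨y₀, hy⟩
    | some x₀ => exact ⟨x₀, hx⟩
  exfalso
  apply hni
  refine ⟨x₀, fun w hadj => ?_⟩
  by_cases hww : w = x₀
  · exact G.loopless.irrefl x₀ (hww ▸ hadj)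
  have hwM : some w ∉ M := fun hwM => hww (h2 w hwM x₀ hx₀)
  have := hM (some w) hwM none hnone (some x₀) hx₀
  rw [addIsolated_some_some] at this
  exact addIsolated_not_adj_none_right G (some w) (this.mpr hadj.symm)

lemma famGraph_module_p4 : ∀ j (M : Set (famType j)), IsModule (famGraph j) M →
    ∀ x ∈ M, ∀ y ∈ M, x ≠ y →
    ∃ a b c d, a ∈ M ∧ b ∈ M ∧ c ∈ M ∧ d ∈ M ∧ P4pat (famGraph j) a b c d := by
  intro j
  induction j with
  | zero =>
    intro M hM x hx y hy hxy
    have hall := p4_module M hM hx hy hxy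
    exact ⟨baseV 0 0, baseV 0 1, baseV 0 2, baseV 0 3, hall _, hall _, hall _, hall _, famGraph_base 0⟩
  | succ j ih =>
    rcases Nat.mod_two_eq_zero_or_one j with h | h
    · rw [famGraph_succ_even j h]
      refine module_step_apex _ (famGraph_no_univ j h) ?_ ih
      have := famGraph_base (j + 1)
      rw [famGraph_succ_even j h] at this
      exact ⟨_, _, _, _, this⟩
    · rw [famGraph_succ_odd j h]
      refine module_step_isol _ (famGraph_no_isol j h) ?_ ih
      have := famGraph_base (j + 1)
      rw [famGraph_succ_odd j h] at this
      exact ⟨_, _, _, _, this⟩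

/-! ### Substitution lemmas -/

lemma subst_adj_same {k : ℕ} (T : SimpleGraph (Fin k)) {β : Fin k → Type}
    (H : ∀ i, SimpleGraph (β i)) (i : Fin k) (a b : β i) :
    (graphSubst T H).Adj ⟨i, a⟩ ⟨i, b⟩ ↔ (H i).Adj a b := by
  constructor
  · rintro (h | ⟨i', a', b', h1, h2, h⟩)
    · exact absurd h (T.irrefl)
    · obtain ⟨rfl, ha⟩ := Sigma.mk.inj_iff.mp h1
      obtain ⟨-, hb⟩ := Sigma.mk.inj_iff.mp h2
      cases ha; cases hb; exact h
  · exact fun h => Or.inr ⟨i, a, b, rfl, rfl, h⟩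

lemma subst_pat_to_part {k : ℕ} {T : SimpleGraph (Fin k)} {β : Fin k → Type}
    {H : ∀ i, SimpleGraph (β i)} {i : Fin k} {p q r s : Σ i, β i}
    (hp : p.1 = i) (hq : q.1 = i) (hr : r.1 = i) (hs : s.1 = i)
    (h : P4pat (graphSubst T H) p q r s) : ∃ a b c d : β i, P4pat (H i) a b c d := by
  obtain ⟨p1, p2⟩ := p
  obtain ⟨q1, q2⟩ := q
  obtain ⟨r1, r2⟩ := r
  obtain ⟨s1, s2⟩ := s
  dsimp at hp hq hr hs
  subst hp; subst hq; subst hr; subst hs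
  obtain ⟨h1, h2, h3, h4, h5, h6⟩ := h
  exact ⟨p2, q2, r2, s2, (subst_adj_same T H _ _ _).mp h1, (subst_adj_same T H _ _ _).mp h2,
    (subst_adj_same T H _ _ _).mp h3, fun h => h4 ((subst_adj_same T H _ _ _).mpr h),
    fun h => h5 ((subst_adj_same T H _ _ _).mpr h),
    fun h => h6 ((subst_adj_same T H _ _ _).mpr h)⟩

lemma parts_subsingleton {j k : ℕ} {T : SimpleGraph (Fin k)} {β : Fin k → Type}
    {H : ∀ i, SimpleGraph (β i)} (hco : ∀ i, IsCograph (H i))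
    (e : famGraph j ≃g graphSubst T H) (i : Fin k) : ∀ a b : β i, a = b := by
  intro a b
  by_contra hab
  set M : Set (famType j) := {v | (e v).1 = i} with hMdef
  have key : ∀ u, u ∉ M → ∀ z : famType j, (e z).1 = i →
      ((graphSubst T H).Adj (e u) (e z) ↔ T.Adj (e u).1 i) := by
    intro u hu z hz
    constructor
    · rintro (h | ⟨i', a', b', h1, h2, h⟩)
      · rwa [hz] at h
      · exfalso
        apply hu
        show (e u).1 = i
        rw [h1]
        rw [h2] at hz
        exact hz
    · intro h
      exact Or.inl (by rwa [hz])
  have hmod : IsModule (famGraph j) M := by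
    intro u hu x hx y hy
    rw [← e.map_adj_iff (v := u) (w := x), ← e.map_adj_iff (v := u) (w := y)]
    rw [key u hu x hx, key u hu y hy]
  have hx : e.symm ⟨i, a⟩ ∈ M := by
    show (e (e.symm ⟨i, a⟩)).1 = i
    rw [RelIso.apply_symm_apply]
  have hy : e.symm ⟨i, b⟩ ∈ M := by
    show (e (e.symm ⟨i, b⟩)).1 = i
    rw [RelIso.apply_symm_apply]
  have hne : e.symm ⟨i, a⟩ ≠ e.symm ⟨i, b⟩ := by
    intro h
    apply hab
    have := congrArg e h
    rw [RelIso.apply_symm_apply, RelIso.apply_symm_apply] at this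
    obtain ⟨-, h2⟩ := Sigma.mk.inj_iff.mp this
    exact eq_of_heq h2
  obtain ⟨p, q, r, s, hp, hq, hr, hs, hpat⟩ := famGraph_module_p4 j M hmod _ hx _ hy hne
  obtain ⟨a', b', c', d', hpat'⟩ := subst_pat_to_part hp hq hr hs (hpat.map e)
  exact (hco i).no_p4 a' b' c' d' hpat'

/-! ### Cardinality -/

def famTypeEquiv : ∀ j, famType j ≃ Fin (j + 4)
  | 0 => Equiv.refl _
  | j + 1 => (Equiv.optionCongr (famTypeEquiv j)).trans (finSuccEquiv (j + 4)).symm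

/-! ### Part 2: the construction -/

lemma bot_unit_cograph : IsCograph (⊥ : SimpleGraph Unit) :=
  ⟨Cotree.leaf, ⟨SimpleGraph.Iso.refl⟩⟩

lemma built_fam : ∀ j, BuiltFromOneSubstWidth4 (famGraph j) := by
  intro j
  induction j with
  | zero =>
    refine BuiltFromOneSubstWidth4.base _ (SimpleGraph.pathGraph 4) (fun _ => Unit)
      (fun _ => ⊥) (fun _ => ⟨()⟩)
      (fun _ => bot_unit_cograph) ⟨?_⟩
    exact
      { toFun := fun i => ⟨i, ()⟩
        invFun := Sigma.fst
        left_inv := fun i => rfl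
        right_inv := fun p => rfl
        map_rel_iff' := by
          intro a b
          constructor
          · rintro (h | ⟨i, a', b', -, -, h⟩)
            · exact h
            · exact h.elim
          · exact fun h => Or.inl h }
  | succ j ih =>
    rcases Nat.mod_two_eq_zero_or_one j with h | h
    · rw [famGraph_succ_even j h]
      exact BuiltFromOneSubstWidth4.apex _ ih
    · rw [famGraph_succ_odd j h]
      exact BuiltFromOneSubstWidth4.isol _ ih

end Aux

/-- For every `n ≥ 4`: every representation of `G_n` as a substitution
`T(H_1, …, H_k)` with all operands nonempty cographs has `k = n` (so any algebraic
expression for `G_n` whose last operation is a substitution has width `n`); whereas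
`G_n` can be built using a single substitution operation of width `4` (building `P_4`)
followed by complete joins and disjoint unions with single vertices. -/
theorem substitution_last_is_restrictive (n : ℕ) (hn : 4 ≤ n) :
    (∀ (k : ℕ) (T : SimpleGraph (Fin k)) (β : Fin k → Type) (H : ∀ i, SimpleGraph (β i)),
      (∀ i, Nonempty (β i)) → (∀ i, IsCograph (H i)) →
      Nonempty (famGraph (n - 4) ≃g graphSubst T H) → k = n) ∧
    BuiltFromOneSubstWidth4 (famGraph (n - 4)) := by
  constructor
  · rintro k T β H hne hco ⟨e⟩
    have hsub := parts_subsingleton hco e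
    have esig : (Σ i, β i) ≃ Fin k :=
      { toFun := Sigma.fst
        invFun := fun i => ⟨i, Classical.choice (hne i)⟩
        left_inv := fun p => Sigma.ext rfl (heq_of_eq (hsub p.1 _ p.2))
        right_inv := fun i => rfl }
    have h1 : Nonempty (Fin (n - 4 + 4) ≃ Fin k) :=
      ⟨(famTypeEquiv (n - 4)).symm.trans (e.toEquiv.trans esig)⟩
    have h2 := Fin.equiv_iff_eq.mp h1
    omega
  · exact built_fam (n - 4)
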